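/- Let 0 < τ₁ < ⋯ < τ_M ≤ 1, Q the collocation matrix, and Q_{Δ,m} = diag(τ₁/m, …, τ_M/m). The M commuting-simultaneously-triangularizable matrices I − Q_{Δ,m}⁻¹Q (m = 1,…,M) are simultaneously diagonalizable: in the Vandermonde basis τ⁰, …, τ^{M−1} of ℝ^M, each I − Q_{Δ,m}⁻¹Q is represented by the diagonal matrix diag(1 − m/1, 1 − m/2, …, 1 − m/M). -/

import Mathlib

/-!
The Lagrange basis reproduces every polynomial of degree `< M` from its values at the nodes, so
on such values the collocation matrix `Q` acts as integration from `0`: it sends `τⁿ` to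
`τⁿ⁺¹ / (n + 1)`. Multiplying by `Q_{Δ,m}⁻¹ = diag(m / τᵢ)` then returns `m / (n + 1) • τⁿ`, and the
vectors `τⁿ` form a basis because the Vandermonde determinant of distinct nodes is nonzero.
-/

open Polynomial Matrix Finset

noncomputable def collMat {M : ℕ} (τ : Fin M → ℝ) : Matrix (Fin M) (Fin M) ℝ :=
  Matrix.of fun i j => ∫ s in (0:ℝ)..(τ i), (Lagrange.basis Finset.univ τ j).eval s

theorem Lagrange.sum_eval_mul_eval_basis {F ι : Type*} [Field F] [DecidableEq ι] {s : Finset ι}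
    {v : ι → F} (hvs : Set.InjOn v s) {p : F[X]} (hp : p.degree < #s) (t : F) :
    ∑ j ∈ s, p.eval (v j) * (Lagrange.basis s v j).eval t = p.eval t := by
  conv_rhs => rw [Lagrange.eq_interpolate hvs hp]
  simp [Lagrange.interpolate_apply, eval_finsetSum]

theorem Matrix.inv_diagonal_of_ne_zero {n K : Type*} [Fintype n] [DecidableEq n] [Field K]
    {d : n → K} (hd : ∀ i, d i ≠ 0) : (diagonal d)⁻¹ = diagonal fun i => (d i)⁻¹ :=
  inv_eq_right_inv <| by simp [diagonal_mul_diagonal, hd]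

theorem collMat_mulVec_eval {M : ℕ} {τ : Fin M → ℝ} (hτ : Function.Injective τ) {p : ℝ[X]}
    (hp : p.degree < M) :
    collMat τ *ᵥ (fun i => p.eval (τ i)) = fun i => ∫ s in (0:ℝ)..τ i, p.eval s := by
  funext i
  calc (collMat τ *ᵥ fun i => p.eval (τ i)) i
      = ∑ j, ∫ s in (0:ℝ)..τ i, p.eval (τ j) * (Lagrange.basis univ τ j).eval s := by
        simp [collMat, mulVec, dotProduct, mul_comm]
    _ = ∫ s in (0:ℝ)..τ i, ∑ j, p.eval (τ j) * (Lagrange.basis univ τ j).eval s :=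
        (intervalIntegral.integral_finsetSum fun j _ =>
          ((Lagrange.basis univ τ j).continuous.const_mul _).intervalIntegrable _ _).symm
    _ = ∫ s in (0:ℝ)..τ i, p.eval s := by
        have hp' : p.degree < #(univ : Finset (Fin M)) := by simpa using hp
        simp_rw [Lagrange.sum_eval_mul_eval_basis hτ.injOn hp']

theorem collMat_mulVec_pow {M : ℕ} {τ : Fin M → ℝ} (hτ : Function.Injective τ) {n : ℕ}
    (hn : n < M) : collMat τ *ᵥ (fun i => τ i ^ n) = fun i => τ i ^ (n + 1) / (n + 1) := by
  simpa using collMat_mulVec_eval hτ (p := X ^ n) (by simpa using hn)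

theorem linearIndependent_pow_of_injective {K : Type*} [Field K] {M : ℕ} {τ : Fin M → K}
    (hτ : Function.Injective τ) : LinearIndependent K fun n : Fin M => fun i => τ i ^ (n : ℕ) := by
  rw [show (fun n : Fin M => fun i => τ i ^ (n : ℕ)) = (vandermonde τ).col from rfl,
    linearIndependent_cols_iff_isUnit, isUnit_iff_isUnit_det, isUnit_iff_ne_zero]
  exact det_vandermonde_ne_zero_iff.mpr hτ

theorem simultaneous_diagonalization_general (M : ℕ) (τ : Fin M → ℝ) (hmono : StrictMono τ)
    (hpos : ∀ i, 0 < τ i) :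
    (LinearIndependent ℝ (fun n : Fin M => fun i => τ i ^ (n : ℕ)) ∧
      Submodule.span ℝ (Set.range (fun n : Fin M => fun i => τ i ^ (n : ℕ))) = ⊤) ∧
    (∀ m : ℕ, 1 ≤ m → m ≤ M → ∀ n : Fin M,
      (1 - (Matrix.diagonal fun i => τ i / m)⁻¹ * collMat τ).mulVec (fun i => τ i ^ (n : ℕ)) =
        (1 - (m : ℝ) / ((n : ℕ) + 1)) • fun i => τ i ^ (n : ℕ)) := by
  have hli := linearIndependent_pow_of_injective hmono.injective
  refine ⟨⟨hli, hli.span_eq_top_of_card_eq_finrank' (by simp)⟩, fun m hm _ n => ?_⟩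
  have hm0 : (m : ℝ) ≠ 0 := Nat.cast_ne_zero.mpr (by omega)
  rw [inv_diagonal_of_ne_zero fun i => div_ne_zero (hpos i).ne' hm0, sub_mulVec, one_mulVec,
    ← mulVec_mulVec, collMat_mulVec_pow hmono.injective n.2]
  funext i
  have hτ := (hpos i).ne'
  simp only [Pi.sub_apply, mulVec_diagonal, Pi.smul_apply, smul_eq_mul]
  field_simp
  ring

/-- the matrices `I - Q_{Δ,m}⁻¹Q`, `m = 1,…,M`, are simultaneously
diagonalizable in the Vandermonde basis `τ⁰,…,τ^{M-1}`: each basis vector `τⁿ` is an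
eigenvector with eigenvalue `1 - m/(n+1)`. -/
theorem simultaneous_diagonalization (M : ℕ) (τ : Fin M → ℝ) (hmono : StrictMono τ)
    (hpos : ∀ i, 0 < τ i) (h1 : ∀ i, τ i ≤ 1) :
    (LinearIndependent ℝ (fun n : Fin M => fun i => τ i ^ (n : ℕ)) ∧
      Submodule.span ℝ (Set.range (fun n : Fin M => fun i => τ i ^ (n : ℕ))) = ⊤) ∧
    (∀ m : ℕ, 1 ≤ m → m ≤ M → ∀ n : Fin M,
      (1 - (Matrix.diagonal fun i => τ i / m)⁻¹ * collMat τ).mulVec (fun i => τ i ^ (n : ℕ)) =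
        (1 - (m : ℝ) / ((n : ℕ) + 1)) • fun i => τ i ^ (n : ℕ)) :=
  simultaneous_diagonalization_general M τ hmono hpos
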